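/- Suppose (X,Y) is a pair of I-valued random variables, I = [1/2,1] ∪ {∞}, each with marginal law ν (density 1/(2x²) on (1/2,1), atom 1/2 at ∞), satisfying the bivariate recursion (X,Y) =_d (Φ(X₁∧X₂; U), Φ(Y₁∧Y₂; V)), where (X₁,Y₁), (X₂,Y₂) are i.i.d. copies of (X,Y) independent of i.i.d. U, V ~ Uniform[0,1], and Φ(x;u)=x if x>u, Φ(x;u)=∞ else. Then the joint distribution function F(x,y) = P(X ≤ x, Y ≤ y) satisfies, for all x, y ∈ [1/2, 1]: F(x,y) = ∫₀ˣ∫₀ʸ [G²(x,y) − G²(x,v) − G²(u,y) + G²(u,v)] dv du, where G(x,y) = P(X > x, Y > y). -/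
import Mathlib


open MeasureTheory ENNReal

/-- The frozen percolation map `Φ(x;u) = x` if `x > u`, `∞` otherwise. -/
noncomputable def frozenPhi (x : ℝ≥0∞) (u : ℝ) : ℝ≥0∞ :=
  if ENNReal.ofReal u < x then x else ⊤

/-- The measure `ν` on `[1/2,1] ∪ {∞} ⊆ ℝ≥0∞`: density `1/(2x²)` on `(1/2,1)`
and an atom of mass `1/2` at `∞`. -/
noncomputable def nuFP : Measure ℝ≥0∞ :=
  Measure.map ENNReal.ofReal
      ((volume.restrict (Set.Ioo (1/2 : ℝ) 1)).withDensity
        (fun x => ENNReal.ofReal (1/(2*x^2)))) +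
    ENNReal.ofReal (1/2) • Measure.dirac ⊤

lemma frozenPhi_le_ofReal {m : ℝ≥0∞} {u c : ℝ} :
    frozenPhi m u ≤ ENNReal.ofReal c ↔ ENNReal.ofReal u < m ∧ m ≤ ENNReal.ofReal c := by
  unfold frozenPhi
  split_ifs with h
  · simp [h]
  · simp [h, top_le_iff, ENNReal.ofReal_ne_top]

lemma meas_incl_excl {α : Type*} {mα : MeasurableSpace α} (μ : Measure α)
    {A A' B B' : Set α} (hA' : MeasurableSet A') (hB' : MeasurableSet B')
    (hAA : A' ⊆ A) (hBB : B' ⊆ B) :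
    μ ((A \ A') ∩ (B \ B')) + μ (A' ∩ B) + μ (A ∩ B') = μ (A ∩ B) + μ (A' ∩ B') := by
  have h1 : μ (A' ∩ B) + μ ((A \ A') ∩ B) = μ (A ∩ B) := by
    rw [← measure_inter_add_diff (A ∩ B) hA']
    congr 1
    · congr 1; ext z; have := @hAA z; simp only [Set.mem_inter_iff]; tauto
    · congr 1; ext z; simp only [Set.mem_inter_iff, Set.mem_diff]; tauto
  have h2 : μ ((A \ A') ∩ B') + μ ((A \ A') ∩ (B \ B')) = μ ((A \ A') ∩ B) := by
    rw [← measure_inter_add_diff ((A \ A') ∩ B) hB']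
    congr 1
    · congr 1; ext z; have := @hBB z; simp only [Set.mem_inter_iff, Set.mem_diff]; tauto
    · congr 1; ext z; simp only [Set.mem_inter_iff, Set.mem_diff]; tauto
  have h3 : μ (A' ∩ B') + μ (A' ∩ (B \ B')) = μ (A' ∩ B) := by
    rw [← measure_inter_add_diff (A' ∩ B) hB']
    congr 1
    · congr 1; ext z; have := @hBB z; simp only [Set.mem_inter_iff]; tauto
    · congr 1; ext z; simp only [Set.mem_inter_iff, Set.mem_diff]; tauto
  have h4 : μ (A' ∩ B') + μ ((A \ A') ∩ B') = μ (A ∩ B') := by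
    rw [← measure_inter_add_diff (A ∩ B') hA']
    congr 1
    · congr 1; ext z; have := @hAA z; simp only [Set.mem_inter_iff]; tauto
    · congr 1; ext z; simp only [Set.mem_inter_iff, Set.mem_diff]; tauto
  rw [← h1, ← h2, ← h3, ← h4]
  ring
section Kap

variable (μ₂ : Measure (ℝ≥0∞ × ℝ≥0∞)) [IsProbabilityMeasure μ₂]

def kapSet (x y : ℝ) : Set ((ℝ × ℝ) × ((ℝ≥0∞ × ℝ≥0∞) × (ℝ≥0∞ × ℝ≥0∞))) :=
  {z | (ENNReal.ofReal z.1.1 < min z.2.1.1 z.2.2.1 ∧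
          min z.2.1.1 z.2.2.1 ≤ ENNReal.ofReal x) ∧
       (ENNReal.ofReal z.1.2 < min z.2.1.2 z.2.2.2 ∧
          min z.2.1.2 z.2.2.2 ≤ ENNReal.ofReal y)}

lemma kapSet_measurable (x y : ℝ) : MeasurableSet (kapSet x y) := by
  have m1 : Measurable fun z : (ℝ × ℝ) × ((ℝ≥0∞ × ℝ≥0∞) × (ℝ≥0∞ × ℝ≥0∞)) =>
      min z.2.1.1 z.2.2.1 := (measurable_snd.fst.fst).min (measurable_snd.snd.fst)
  have m2 : Measurable fun z : (ℝ × ℝ) × ((ℝ≥0∞ × ℝ≥0∞) × (ℝ≥0∞ × ℝ≥0∞)) =>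
      min z.2.1.2 z.2.2.2 := (measurable_snd.fst.snd).min (measurable_snd.snd.snd)
  have m3 : Measurable fun z : (ℝ × ℝ) × ((ℝ≥0∞ × ℝ≥0∞) × (ℝ≥0∞ × ℝ≥0∞)) =>
      ENNReal.ofReal z.1.1 := ENNReal.measurable_ofReal.comp (measurable_fst.fst)
  have m4 : Measurable fun z : (ℝ × ℝ) × ((ℝ≥0∞ × ℝ≥0∞) × (ℝ≥0∞ × ℝ≥0∞)) =>
      ENNReal.ofReal z.1.2 := ENNReal.measurable_ofReal.comp (measurable_fst.snd)
  have e1 : {z : (ℝ × ℝ) × ((ℝ≥0∞ × ℝ≥0∞) × (ℝ≥0∞ × ℝ≥0∞)) |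
      min z.2.1.1 z.2.2.1 ≤ ENNReal.ofReal x}
      = {z | ENNReal.ofReal x < min z.2.1.1 z.2.2.1}ᶜ := by
    ext z; simp only [Set.mem_setOf_eq, Set.mem_compl_iff, not_lt]
  have e2 : {z : (ℝ × ℝ) × ((ℝ≥0∞ × ℝ≥0∞) × (ℝ≥0∞ × ℝ≥0∞)) |
      min z.2.1.2 z.2.2.2 ≤ ENNReal.ofReal y}
      = {z | ENNReal.ofReal y < min z.2.1.2 z.2.2.2}ᶜ := by
    ext z; simp only [Set.mem_setOf_eq, Set.mem_compl_iff, not_lt]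
  have : kapSet x y =
      ({z : (ℝ × ℝ) × ((ℝ≥0∞ × ℝ≥0∞) × (ℝ≥0∞ × ℝ≥0∞)) |
        ENNReal.ofReal z.1.1 < min z.2.1.1 z.2.2.1} ∩
       {z | min z.2.1.1 z.2.2.1 ≤ ENNReal.ofReal x}) ∩
      ({z | ENNReal.ofReal z.1.2 < min z.2.1.2 z.2.2.2} ∩
       {z | min z.2.1.2 z.2.2.2 ≤ ENNReal.ofReal y}) := rfl
  rw [this, e1, e2]
  exact ((measurableSet_lt m3 m1).inter (measurableSet_lt measurable_const m1).compl).inter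
    ((measurableSet_lt m4 m2).inter (measurableSet_lt measurable_const m2).compl)

noncomputable def kap (x y u v : ℝ) : ℝ≥0∞ :=
  (μ₂.prod μ₂) (Prod.mk (u, v) ⁻¹' kapSet x y)

lemma kap_meas (x y : ℝ) : Measurable (fun z : ℝ × ℝ => kap μ₂ x y z.1 z.2) :=
  measurable_measure_prodMk_left (kapSet_measurable x y)

lemma gset_meas (a b : ℝ) :
    MeasurableSet {p : ℝ≥0∞ × ℝ≥0∞ | ENNReal.ofReal a < p.1 ∧ ENNReal.ofReal b < p.2} := by
  have h1 : MeasurableSet {p : ℝ≥0∞ × ℝ≥0∞ | ENNReal.ofReal a < p.1} :=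
    measurableSet_lt measurable_const measurable_fst
  have h2 : MeasurableSet {p : ℝ≥0∞ × ℝ≥0∞ | ENNReal.ofReal b < p.2} :=
    measurableSet_lt measurable_const measurable_snd
  exact h1.inter h2

lemma SS_meas (a : ℝ) :
    MeasurableSet {pq : (ℝ≥0∞ × ℝ≥0∞) × (ℝ≥0∞ × ℝ≥0∞) |
      ENNReal.ofReal a < min pq.1.1 pq.2.1} :=
  measurableSet_lt measurable_const ((measurable_fst.fst).min (measurable_snd.fst))

lemma TT_meas (b : ℝ) :
    MeasurableSet {pq : (ℝ≥0∞ × ℝ≥0∞) × (ℝ≥0∞ × ℝ≥0∞) |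
      ENNReal.ofReal b < min pq.1.2 pq.2.2} :=
  measurableSet_lt measurable_const ((measurable_fst.snd).min (measurable_snd.snd))

lemma SS_inter_TT (a b : ℝ) :
    {pq : (ℝ≥0∞ × ℝ≥0∞) × (ℝ≥0∞ × ℝ≥0∞) | ENNReal.ofReal a < min pq.1.1 pq.2.1} ∩
      {pq | ENNReal.ofReal b < min pq.1.2 pq.2.2} =
    {p : ℝ≥0∞ × ℝ≥0∞ | ENNReal.ofReal a < p.1 ∧ ENNReal.ofReal b < p.2} ×ˢ
      {p : ℝ≥0∞ × ℝ≥0∞ | ENNReal.ofReal a < p.1 ∧ ENNReal.ofReal b < p.2} := by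
  ext pq
  simp only [Set.mem_inter_iff, Set.mem_setOf_eq, Set.mem_prod, lt_min_iff]
  tauto

lemma kap_zero_left {x : ℝ} (hx : 0 < x) (y u v : ℝ) (hu : x < u) :
    kap μ₂ x y u v = 0 := by
  unfold kap
  have hempty : Prod.mk (u, v) ⁻¹' kapSet x y = (∅ : Set ((ℝ≥0∞ × ℝ≥0∞) × (ℝ≥0∞ × ℝ≥0∞))) := by
    ext pq
    simp only [Set.mem_preimage, Set.mem_empty_iff_false, iff_false]
    rintro ⟨⟨h1, h2⟩, -⟩
    have : ENNReal.ofReal u < ENNReal.ofReal x := lt_of_lt_of_le h1 h2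
    rw [ENNReal.ofReal_lt_ofReal_iff hx] at this
    linarith
  rw [hempty]
  exact measure_empty

lemma kap_zero_right {y : ℝ} (hy : 0 < y) (x u v : ℝ) (hv : y < v) :
    kap μ₂ x y u v = 0 := by
  unfold kap
  have hempty : Prod.mk (u, v) ⁻¹' kapSet x y = (∅ : Set ((ℝ≥0∞ × ℝ≥0∞) × (ℝ≥0∞ × ℝ≥0∞))) := by
    ext pq
    simp only [Set.mem_preimage, Set.mem_empty_iff_false, iff_false]
    rintro ⟨-, ⟨h1, h2⟩⟩
    have : ENNReal.ofReal v < ENNReal.ofReal y := lt_of_lt_of_le h1 h2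
    rw [ENNReal.ofReal_lt_ofReal_iff hy] at this
    linarith
  rw [hempty]
  exact measure_empty

lemma kap_le_one (x y u v : ℝ) : kap μ₂ x y u v ≤ 1 := by
  unfold kap
  exact le_trans (measure_mono (Set.subset_univ _)) (by simp)


lemma kap_identity {x y u v : ℝ} (hu : u ≤ x) (hv : v ≤ y) :
    kap μ₂ x y u v
      + μ₂ {p | ENNReal.ofReal x < p.1 ∧ ENNReal.ofReal v < p.2}
        * μ₂ {p | ENNReal.ofReal x < p.1 ∧ ENNReal.ofReal v < p.2}
      + μ₂ {p | ENNReal.ofReal u < p.1 ∧ ENNReal.ofReal y < p.2}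
        * μ₂ {p | ENNReal.ofReal u < p.1 ∧ ENNReal.ofReal y < p.2}
    = μ₂ {p | ENNReal.ofReal u < p.1 ∧ ENNReal.ofReal v < p.2}
        * μ₂ {p | ENNReal.ofReal u < p.1 ∧ ENNReal.ofReal v < p.2}
      + μ₂ {p | ENNReal.ofReal x < p.1 ∧ ENNReal.ofReal y < p.2}
        * μ₂ {p | ENNReal.ofReal x < p.1 ∧ ENNReal.ofReal y < p.2} := by
  have hsec : Prod.mk (u, v) ⁻¹' kapSet x y =
      ({pq : (ℝ≥0∞ × ℝ≥0∞) × (ℝ≥0∞ × ℝ≥0∞) | ENNReal.ofReal u < min pq.1.1 pq.2.1} \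
        {pq | ENNReal.ofReal x < min pq.1.1 pq.2.1}) ∩
      ({pq | ENNReal.ofReal v < min pq.1.2 pq.2.2} \
        {pq | ENNReal.ofReal y < min pq.1.2 pq.2.2}) := by
    ext pq
    simp only [Set.mem_preimage, kapSet, Set.mem_setOf_eq, Set.mem_inter_iff, Set.mem_diff,
      not_lt]
  have hsub1 : {pq : (ℝ≥0∞ × ℝ≥0∞) × (ℝ≥0∞ × ℝ≥0∞) |
      ENNReal.ofReal x < min pq.1.1 pq.2.1} ⊆
      {pq | ENNReal.ofReal u < min pq.1.1 pq.2.1} := fun pq h =>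
    lt_of_le_of_lt (ENNReal.ofReal_le_ofReal hu) h
  have hsub2 : {pq : (ℝ≥0∞ × ℝ≥0∞) × (ℝ≥0∞ × ℝ≥0∞) |
      ENNReal.ofReal y < min pq.1.2 pq.2.2} ⊆
      {pq | ENNReal.ofReal v < min pq.1.2 pq.2.2} := fun pq h =>
    lt_of_le_of_lt (ENNReal.ofReal_le_ofReal hv) h
  have key := meas_incl_excl (μ₂.prod μ₂) (SS_meas x) (TT_meas y) hsub1 hsub2
  rw [SS_inter_TT x v, SS_inter_TT u y, SS_inter_TT u v, SS_inter_TT x y,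
    Measure.prod_prod, Measure.prod_prod, Measure.prod_prod, Measure.prod_prod] at key
  unfold kap
  rw [hsec]
  exact key

lemma measure_eq_iterated {x y : ℝ} (hx0 : 0 < x) (hx1 : x ≤ 1) (hy0 : 0 < y) (hy1 : y ≤ 1)
    (hrec : Measure.map
        (fun p : (ℝ≥0∞ × ℝ≥0∞) × (ℝ≥0∞ × ℝ≥0∞) × (ℝ × ℝ) =>
          (frozenPhi (min p.1.1 p.2.1.1) p.2.2.1,
           frozenPhi (min p.1.2 p.2.1.2) p.2.2.2))
        (μ₂.prod (μ₂.prod ((volume.restrict (Set.Icc (0:ℝ) 1)).prod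
          (volume.restrict (Set.Icc (0:ℝ) 1))))) = μ₂) :
    μ₂ {p | p.1 ≤ ENNReal.ofReal x ∧ p.2 ≤ ENNReal.ofReal y} =
      ∫⁻ u in Set.Icc (0:ℝ) x, ∫⁻ v in Set.Icc (0:ℝ) y, kap μ₂ x y u v ∂volume ∂volume := by
  classical
  set lam : Measure ℝ := volume.restrict (Set.Icc (0:ℝ) 1) with hlam
  set φ : (ℝ≥0∞ × ℝ≥0∞) × (ℝ≥0∞ × ℝ≥0∞) × (ℝ × ℝ) → ℝ≥0∞ × ℝ≥0∞ :=
    fun p => (frozenPhi (min p.1.1 p.2.1.1) p.2.2.1,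
              frozenPhi (min p.1.2 p.2.1.2) p.2.2.2) with hφdef
  set e : (ℝ≥0∞ × ℝ≥0∞) × (ℝ≥0∞ × ℝ≥0∞) × (ℝ × ℝ) →
      (ℝ × ℝ) × ((ℝ≥0∞ × ℝ≥0∞) × (ℝ≥0∞ × ℝ≥0∞)) :=
    fun w => (w.2.2, (w.1, w.2.1)) with hedef
  have he : Measurable e :=
    (measurable_snd.snd).prodMk (measurable_fst.prodMk measurable_snd.fst)
  have hphi0 : Measurable fun z : ℝ≥0∞ × ℝ => frozenPhi z.1 z.2 := by
    unfold frozenPhi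
    exact Measurable.ite
      (measurableSet_lt (ENNReal.measurable_ofReal.comp measurable_snd) measurable_fst)
      measurable_fst measurable_const
  have hφ : Measurable φ := by
    apply Measurable.prodMk
    · exact hphi0.comp
        (((measurable_fst.fst).min (measurable_snd.fst.fst)).prodMk measurable_snd.snd.fst)
    · exact hphi0.comp
        (((measurable_fst.snd).min (measurable_snd.fst.snd)).prodMk measurable_snd.snd.snd)
  have hSmeas : MeasurableSet {p : ℝ≥0∞ × ℝ≥0∞ |
      p.1 ≤ ENNReal.ofReal x ∧ p.2 ≤ ENNReal.ofReal y} := by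
    have h1 : {p : ℝ≥0∞ × ℝ≥0∞ | p.1 ≤ ENNReal.ofReal x ∧ p.2 ≤ ENNReal.ofReal y}
        = {p : ℝ≥0∞ × ℝ≥0∞ | ENNReal.ofReal x < p.1}ᶜ ∩
          {p : ℝ≥0∞ × ℝ≥0∞ | ENNReal.ofReal y < p.2}ᶜ := by
      ext p; simp only [Set.mem_setOf_eq, Set.mem_inter_iff, Set.mem_compl_iff, not_lt]
    rw [h1]
    exact ((measurableSet_lt measurable_const measurable_fst).compl).inter
      ((measurableSet_lt measurable_const measurable_snd).compl)
  have hmap : μ₂ {p : ℝ≥0∞ × ℝ≥0∞ | p.1 ≤ ENNReal.ofReal x ∧ p.2 ≤ ENNReal.ofReal y} =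
      (μ₂.prod (μ₂.prod (lam.prod lam)))
        (φ ⁻¹' {p : ℝ≥0∞ × ℝ≥0∞ | p.1 ≤ ENNReal.ofReal x ∧ p.2 ≤ ENNReal.ofReal y}) := by
    conv_lhs => rw [← hrec]
    rw [Measure.map_apply hφ hSmeas]
  have hpre : φ ⁻¹' {p : ℝ≥0∞ × ℝ≥0∞ | p.1 ≤ ENNReal.ofReal x ∧ p.2 ≤ ENNReal.ofReal y}
      = e ⁻¹' kapSet x y := by
    ext w
    simp only [Set.mem_preimage, Set.mem_setOf_eq, hφdef, hedef, frozenPhi_le_ofReal, kapSet]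
  have hQ : (lam.prod lam).prod (μ₂.prod μ₂) = Measure.map e (μ₂.prod (μ₂.prod (lam.prod lam))) := by
    apply Measure.prod_eq
    intro s t hs ht
    rw [Measure.map_apply he (hs.prod ht)]
    rw [Measure.prod_apply (he (hs.prod ht))]
    have hsec : ∀ p : ℝ≥0∞ × ℝ≥0∞,
        Prod.mk p ⁻¹' (e ⁻¹' (s ×ˢ t)) = (Prod.mk p ⁻¹' t) ×ˢ s := by
      intro p
      ext r
      simp only [Set.mem_preimage, hedef, Set.mem_prod]
      exact and_comm
    calc ∫⁻ p, (μ₂.prod (lam.prod lam)) (Prod.mk p ⁻¹' (e ⁻¹' (s ×ˢ t))) ∂μ₂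
        = ∫⁻ p, μ₂ (Prod.mk p ⁻¹' t) * (lam.prod lam) s ∂μ₂ := by
          congr 1; funext p; rw [hsec p, Measure.prod_prod]
      _ = (∫⁻ p, μ₂ (Prod.mk p ⁻¹' t) ∂μ₂) * (lam.prod lam) s :=
          lintegral_mul_const _ (measurable_measure_prodMk_left ht)
      _ = (μ₂.prod μ₂) t * (lam.prod lam) s := by rw [← Measure.prod_apply ht]
      _ = (lam.prod lam) s * (μ₂.prod μ₂) t := mul_comm _ _
  have step1 : μ₂ {p : ℝ≥0∞ × ℝ≥0∞ | p.1 ≤ ENNReal.ofReal x ∧ p.2 ≤ ENNReal.ofReal y} =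
      ∫⁻ z, kap μ₂ x y z.1 z.2 ∂(lam.prod lam) := by
    rw [hmap, hpre, ← Measure.map_apply he (kapSet_measurable x y), ← hQ,
      Measure.prod_apply (kapSet_measurable x y)]
    rfl
  rw [step1, lintegral_prod _ ((kap_meas μ₂ x y).aemeasurable)]
  have inner_eq : ∀ u : ℝ,
      ∫⁻ v, kap μ₂ x y u v ∂lam = ∫⁻ v in Set.Icc (0:ℝ) y, kap μ₂ x y u v ∂volume := by
    intro u
    rw [hlam, ← lintegral_indicator measurableSet_Icc, ← lintegral_indicator measurableSet_Icc]
    congr 1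
    funext v
    by_cases h1 : v ∈ Set.Icc (0:ℝ) y
    · rw [Set.indicator_of_mem h1, Set.indicator_of_mem
        (Set.Icc_subset_Icc le_rfl hy1 h1)]
    · rw [Set.indicator_of_notMem h1]
      by_cases h2 : v ∈ Set.Icc (0:ℝ) 1
      · rw [Set.indicator_of_mem h2]
        have hv : y < v := by
          rcases h2 with ⟨h20, h21⟩
          by_contra hcon
          exact h1 ⟨h20, le_of_not_gt hcon⟩
        exact kap_zero_right μ₂ hy0 x u v hv
      · rw [Set.indicator_of_notMem h2]
  have outer_eq :
      ∫⁻ u, (∫⁻ v, kap μ₂ x y u v ∂lam) ∂lam =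
      ∫⁻ u in Set.Icc (0:ℝ) x, (∫⁻ v, kap μ₂ x y u v ∂lam) ∂volume := by
    rw [hlam, ← lintegral_indicator measurableSet_Icc, ← lintegral_indicator measurableSet_Icc]
    congr 1
    funext u
    by_cases h1 : u ∈ Set.Icc (0:ℝ) x
    · rw [Set.indicator_of_mem h1, Set.indicator_of_mem (Set.Icc_subset_Icc le_rfl hx1 h1)]
    · rw [Set.indicator_of_notMem h1]
      by_cases h2 : u ∈ Set.Icc (0:ℝ) 1
      · rw [Set.indicator_of_mem h2]
        have hu : x < u := by
          rcases h2 with ⟨h20, h21⟩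
          by_contra hcon
          exact h1 ⟨h20, le_of_not_gt hcon⟩
        have : ∀ v : ℝ, kap μ₂ x y u v = 0 := fun v => kap_zero_left μ₂ hx0 y u v hu
        simp [this]
      · rw [Set.indicator_of_notMem h2]
  rw [outer_eq]
  congr 1
  funext u
  exact inner_eq u

end Kap

/-- If `(X,Y)` has marginals `ν` and satisfies the bivariate frozen percolation
recursion with independent innovations, then the joint distribution function
`F(x,y) = P(X ≤ x, Y ≤ y)` satisfies the stated double-integral identity, where
`G(x,y) = P(X > x, Y > y)`. -/
theorem stmt_7 (μ₂ : Measure (ℝ≥0∞ × ℝ≥0∞)) [IsProbabilityMeasure μ₂]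
    (hmarg₁ : Measure.map Prod.fst μ₂ = nuFP)
    (hmarg₂ : Measure.map Prod.snd μ₂ = nuFP)
    (hrec : Measure.map
        (fun p : (ℝ≥0∞ × ℝ≥0∞) × (ℝ≥0∞ × ℝ≥0∞) × (ℝ × ℝ) =>
          (frozenPhi (min p.1.1 p.2.1.1) p.2.2.1,
           frozenPhi (min p.1.2 p.2.1.2) p.2.2.2))
        (μ₂.prod (μ₂.prod ((volume.restrict (Set.Icc (0:ℝ) 1)).prod
          (volume.restrict (Set.Icc (0:ℝ) 1))))) = μ₂)
    (F G : ℝ → ℝ → ℝ)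
    (hF : ∀ x y : ℝ, F x y =
      (μ₂ {p | p.1 ≤ ENNReal.ofReal x ∧ p.2 ≤ ENNReal.ofReal y}).toReal)
    (hG : ∀ x y : ℝ, G x y =
      (μ₂ {p | ENNReal.ofReal x < p.1 ∧ ENNReal.ofReal y < p.2}).toReal) :
    ∀ x ∈ Set.Icc (1/2 : ℝ) 1, ∀ y ∈ Set.Icc (1/2 : ℝ) 1,
      F x y = ∫ u in (0:ℝ)..x, ∫ v in (0:ℝ)..y,
        ((G x y)^2 - (G x v)^2 - (G u y)^2 + (G u v)^2) := by
  intro x hx y hy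
  obtain ⟨hxh, hx1⟩ := hx
  obtain ⟨hyh, hy1⟩ := hy
  have hx0 : (0:ℝ) < x := by linarith
  have hy0 : (0:ℝ) < y := by linarith
  have hmain := measure_eq_iterated μ₂ hx0 hx1 hy0 hy1 hrec
  rw [hF, hmain]
  have hkmeas : Measurable (fun z : ℝ × ℝ => kap μ₂ x y z.1 z.2) := kap_meas μ₂ x y
  have hkmeas1 : ∀ u : ℝ, Measurable (fun v => kap μ₂ x y u v) := by
    intro u
    have : (fun v : ℝ => kap μ₂ x y u v) =
        (fun z : ℝ × ℝ => kap μ₂ x y z.1 z.2) ∘ (fun v => (u, v)) := rfl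
    rw [this]
    exact hkmeas.comp (measurable_const.prodMk measurable_id)
  set L : ℝ → ℝ≥0∞ := fun u => ∫⁻ v in Set.Icc (0:ℝ) y, kap μ₂ x y u v ∂volume with hLdef
  have hLmeas : Measurable L := hkmeas.lintegral_prod_right'
  have hLfin : ∀ u, L u < ⊤ := by
    intro u
    calc L u ≤ ∫⁻ _v in Set.Icc (0:ℝ) y, 1 ∂volume :=
          lintegral_mono fun v => kap_le_one μ₂ x y u v
      _ = volume (Set.Icc (0:ℝ) y) := by simp
      _ < ⊤ := measure_Icc_lt_top
  have hkfin : ∀ u v, kap μ₂ x y u v < ⊤ := fun u v =>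
    lt_of_le_of_lt (kap_le_one μ₂ x y u v) (by simp)
  have hinner : ∀ u : ℝ, 0 ≤ u → u ≤ x →
      (∫ v in (0:ℝ)..y, ((G x y)^2 - (G x v)^2 - (G u y)^2 + (G u v)^2)) = (L u).toReal := by
    intro u _hu0 hux
    rw [intervalIntegral.integral_of_le hy0.le,
      Measure.restrict_congr_set Ioc_ae_eq_Icc]
    rw [hLdef, ← integral_toReal ((hkmeas1 u).aemeasurable)
      (Filter.Eventually.of_forall fun v => hkfin u v)]
    apply setIntegral_congr_fun measurableSet_Icc
    intro v hv
    have hvy : v ≤ y := hv.2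
    have key := kap_identity μ₂ hux hvy
    have hne : ∀ a b : ℝ,
        μ₂ {p : ℝ≥0∞ × ℝ≥0∞ | ENNReal.ofReal a < p.1 ∧ ENNReal.ofReal b < p.2} *
          μ₂ {p : ℝ≥0∞ × ℝ≥0∞ | ENNReal.ofReal a < p.1 ∧ ENNReal.ofReal b < p.2} ≠ ⊤ :=
      fun a b => ENNReal.mul_ne_top (measure_ne_top _ _) (measure_ne_top _ _)
    have hkne : kap μ₂ x y u v ≠ ⊤ := (hkfin u v).ne
    have := congrArg ENNReal.toReal key
    rw [ENNReal.toReal_add (ENNReal.add_ne_top.2 ⟨hkne, hne x v⟩) (hne u y),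
      ENNReal.toReal_add hkne (hne x v),
      ENNReal.toReal_add (hne u v) (hne x y),
      ENNReal.toReal_mul, ENNReal.toReal_mul, ENNReal.toReal_mul, ENNReal.toReal_mul] at this
    rw [← hG x v, ← hG u y, ← hG u v, ← hG x y] at this
    simp only [sq]
    show G x y * G x y - G x v * G x v - G u y * G u y + G u v * G u v
      = (kap μ₂ x y u v).toReal
    linarith
  symm
  calc ∫ u in (0:ℝ)..x, ∫ v in (0:ℝ)..y, ((G x y)^2 - (G x v)^2 - (G u y)^2 + (G u v)^2)
      = ∫ u in Set.Ioc (0:ℝ) x,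
          (∫ v in (0:ℝ)..y, ((G x y)^2 - (G x v)^2 - (G u y)^2 + (G u v)^2)) ∂volume :=
        intervalIntegral.integral_of_le hx0.le
    _ = ∫ u in Set.Icc (0:ℝ) x,
          (∫ v in (0:ℝ)..y, ((G x y)^2 - (G x v)^2 - (G u y)^2 + (G u v)^2)) ∂volume := by
        rw [Measure.restrict_congr_set Ioc_ae_eq_Icc]
    _ = ∫ u in Set.Icc (0:ℝ) x, (L u).toReal ∂volume := by
        apply setIntegral_congr_fun measurableSet_Icc
        intro u hu
        exact hinner u hu.1 hu.2
    _ = (∫⁻ u in Set.Icc (0:ℝ) x, L u ∂volume).toReal := by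
        rw [integral_toReal (hLmeas.aemeasurable)
          (Filter.Eventually.of_forall fun u => hLfin u)]
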